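/- Let n ≥ 1 be an integer, let ω, ω' ∈ ℝ^n, and let γ, γ', τ, K, δ be real numbers with γ > γ' > 0, τ > 0, K ≥ 1 and δ ≥ 0. Assume that |ω'_i − ω_i| ≤ δ for every i, and that δ · K^{τ+1} ≤ γ − γ'. Then for every k ∈ ℤ^n with 0 < ‖k‖₁ ≤ K that satisfies |⟨k, ω⟩| > γ / ‖k‖₁^τ, one also has |⟨k, ω'⟩| > γ' / ‖k‖₁^τ. -/

import Mathlib

/-- Stability of the Diophantine condition under a small shift of the
frequency vector (quantitative core of Lemma 2.6). -/
theorem diophantine_persists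
    (n : ℕ) (hn : 1 ≤ n) (ω ω' : Fin n → ℝ) (γ γ' τ K δ : ℝ)
    (hγγ' : γ > γ') (hγ' : γ' > 0) (hτ : τ > 0) (hK : 1 ≤ K) (hδ : 0 ≤ δ)
    (hclose : ∀ i, |ω' i - ω i| ≤ δ)
    (hsmall : δ * K ^ (τ + 1) ≤ γ - γ') :
    ∀ k : Fin n → ℤ,
      0 < ∑ i, |k i| → ((∑ i, |k i| : ℤ) : ℝ) ≤ K →
      |∑ i, (k i : ℝ) * ω i| > γ / ((∑ i, |k i| : ℤ) : ℝ) ^ τ →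
      |∑ i, (k i : ℝ) * ω' i| > γ' / ((∑ i, |k i| : ℤ) : ℝ) ^ τ := by
  intro k hkpos hkK hdio
  set N : ℝ := ((∑ i, |k i| : ℤ) : ℝ) with hN
  have hN1 : (1 : ℝ) ≤ N := by
    rw [hN]
    exact_mod_cast hkpos
  have hN0 : (0 : ℝ) < N := lt_of_lt_of_le one_pos hN1
  have hNτ : (0 : ℝ) < N ^ τ := Real.rpow_pos_of_pos hN0 τ
  -- bound the difference
  have hdiff : |∑ i, (k i : ℝ) * ω' i - ∑ i, (k i : ℝ) * ω i| ≤ δ * N := by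
    rw [← Finset.sum_sub_distrib]
    calc |∑ i, ((k i : ℝ) * ω' i - (k i : ℝ) * ω i)|
        ≤ ∑ i, |(k i : ℝ) * ω' i - (k i : ℝ) * ω i| :=
          Finset.abs_sum_le_sum_abs _ _
      _ ≤ ∑ i, |(k i : ℝ)| * δ := by
          apply Finset.sum_le_sum
          intro i _
          rw [← mul_sub, abs_mul]
          exact mul_le_mul_of_nonneg_left (hclose i) (abs_nonneg _)
      _ = δ * N := by
          rw [← Finset.sum_mul, mul_comm]
          congr 1
          push_cast [hN]
          rfl
  -- δ * N * N^τ ≤ γ - γ'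
  have hmono : N ^ (τ + 1) ≤ K ^ (τ + 1) :=
    Real.rpow_le_rpow (le_of_lt hN0) hkK (by linarith)
  have hkey : δ * N * N ^ τ ≤ γ - γ' := by
    have : δ * N ^ (τ + 1) ≤ γ - γ' :=
      le_trans (mul_le_mul_of_nonneg_left hmono hδ) hsmall
    calc δ * N * N ^ τ = δ * N ^ (τ + 1) := by
          rw [Real.rpow_add hN0, Real.rpow_one]; ring
      _ ≤ γ - γ' := this
  have htri : |∑ i, (k i : ℝ) * ω i| - δ * N ≤ |∑ i, (k i : ℝ) * ω' i| := by
    have := abs_sub_abs_le_abs_sub (∑ i, (k i : ℝ) * ω i) (∑ i, (k i : ℝ) * ω' i)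
    rw [abs_sub_comm] at this
    linarith
  have : γ' / N ^ τ ≤ γ / N ^ τ - δ * N := by
    rw [div_sub' (ne_of_gt hNτ), div_le_div_iff₀ hNτ hNτ]
    nlinarith
  linarith
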